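/- arXiv:2111.12534 — 4 statements merged into one kernel-verified Lean document; each statement's English description precedes it below -/
import Mathlib

section
/- If x, y, z are elements of a finite group G such that each of the subgroups ⟨x,y⟩, ⟨x,z⟩, ⟨y,z⟩ is cyclic, then ⟨x,y,z⟩ is cyclic. -/
/-!
Two elements generating a cyclic group commute, so `x, y, z` generate an abelian group and we
may work with cyclic subgroups `A, B, C` of a finite abelian group, of orders `a, b, c`. The join `A ⊔ B` has exponent
`lcm |A| |B|` and order `|A| |B| / |A ⊓ B|`, so it is cyclic iff `|A ⊓ B| = gcd |A| |B|`.
Inside the cyclic group `C`, the subgroup `(A ⊔ B) ⊓ C` contains `A ⊓ C` and `B ⊓ C`, of orders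
`gcd a c` and `gcd b c`, while its order divides `gcd (lcm a b) c = lcm (gcd a c) (gcd b c)`;
so `|(A ⊔ B) ⊓ C| = gcd |A ⊔ B| |C|` and `A ⊔ B ⊔ C` is cyclic.
-/

open Subgroup Monoid

theorem Nat.gcd_lcm_dvd_lcm_gcd_gcd (a b c : ℕ) :
    gcd (lcm a b) c ∣ lcm (gcd a c) (gcd b c) := by
  rcases eq_or_ne a 0 with rfl | ha
  · simp [dvd_lcm_left]
  rcases eq_or_ne b 0 with rfl | hb
  · simp [dvd_lcm_right]
  rcases eq_or_ne c 0 with rfl | hc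
  · simp
  rw [← factorization_le_iff_dvd (gcd_ne_zero_right hc)
    (lcm_ne_zero (gcd_ne_zero_right hc) (gcd_ne_zero_right hc))]
  intro p
  simp only [factorization_gcd (lcm_ne_zero ha hb) hc, factorization_lcm ha hb,
    factorization_lcm (gcd_ne_zero_right hc) (gcd_ne_zero_right hc), factorization_gcd ha hc,
    factorization_gcd hb hc, Finsupp.inf_apply, Finsupp.sup_apply]
  omega

namespace Subgroup

section Group

variable {G : Type*} [Group G]

theorem commute_of_isCyclic_closure_pair {x y : G} (h : IsCyclic (closure {x, y})) :
    Commute x y := by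
  let := IsCyclic.commGroup (α := closure {x, y})
  exact congrArg Subtype.val
    (mul_comm (⟨x, subset_closure (by simp)⟩ : closure {x, y}) ⟨y, subset_closure (by simp)⟩)

theorem isMulCommutative_closure_triple {x y z : G} (hxy : Commute x y) (hxz : Commute x z)
    (hyz : Commute y z) : IsMulCommutative (closure {x, y, z}) := by
  refine isMulCommutative_closure ?_
  simp only [Set.mem_insert_iff, Set.mem_singleton_iff]
  rintro a (rfl | rfl | rfl) b (rfl | rfl | rfl)
  exacts [rfl, hxy.eq, hxz.eq, hxy.eq.symm, rfl, hyz.eq, hxz.eq.symm, hyz.eq.symm, rfl]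

theorem closure_insert_eq_zpowers_sup (x : G) (s : Set G) :
    closure (insert x s) = zpowers x ⊔ closure s := by
  rw [Set.insert_eq, closure_union, zpowers_eq_closure]

theorem closure_pair_eq_zpowers_sup (x y : G) : closure {x, y} = zpowers x ⊔ zpowers y := by
  rw [closure_insert_eq_zpowers_sup, ← zpowers_eq_closure]

theorem isCyclic_subgroupOf_iff {H K : Subgroup G} (h : H ≤ K) :
    IsCyclic (H.subgroupOf K) ↔ IsCyclic H :=
  (subgroupOfEquivOfLe h).isCyclic

theorem isCyclic_subgroupOf_sup_iff {A B K : Subgroup G} (hA : A ≤ K) (hB : B ≤ K) :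
    IsCyclic ↥(A.subgroupOf K ⊔ B.subgroupOf K) ↔ IsCyclic ↥(A ⊔ B) := by
  rw [← subgroupOf_sup hA hB, isCyclic_subgroupOf_iff (sup_le hA hB)]

theorem exponent_dvd_of_le {H K : Subgroup G} (h : H ≤ K) : exponent H ∣ exponent K :=
  exponent_dvd_of_monoidHom (inclusion h) (inclusion_injective h)

theorem pow_eq_one_of_exponent_dvd {H : Subgroup G} {n : ℕ} (hn : exponent H ∣ n) {g : G}
    (hg : g ∈ H) : g ^ n = 1 := by
  obtain ⟨k, rfl⟩ := hn
  rw [pow_mul, pow_exponent_eq_one hg, one_pow]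

theorem card_sup_mul_card_inf (A B : Subgroup G) [B.Normal] :
    Nat.card ↥(A ⊔ B) * Nat.card ↥(A ⊓ B) = Nat.card A * Nat.card B := by
  have hsup : B.relIndex (A ⊔ B) * Nat.card B = Nat.card ↥(A ⊔ B) := by
    rw [← Nat.card_congr (subgroupOfEquivOfLe le_sup_right).toEquiv]
    exact index_mul_card _
  have hinf : B.relIndex A * Nat.card ↥(A ⊓ B) = Nat.card A := by
    rw [← Nat.card_congr (subgroupOfEquivOfLe inf_le_left).toEquiv, inf_subgroupOf_left]
    exact index_mul_card _
  rw [← hsup, ← hinf, relIndex_sup_right]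
  ring

end Group

section CommGroup

variable {G : Type*} [CommGroup G]

theorem exponent_sup (A B : Subgroup G) :
    exponent ↥(A ⊔ B) = Nat.lcm (exponent A) (exponent B) := by
  refine Nat.dvd_antisymm ?_
    (Nat.lcm_dvd (exponent_dvd_of_le le_sup_left) (exponent_dvd_of_le le_sup_right))
  refine exponent_dvd_iff_forall_pow_eq_one.mpr fun ⟨g, hg⟩ ↦ Subtype.ext ?_
  obtain ⟨a, ha, b, hb, rfl⟩ := mem_sup.mp hg
  change (a * b) ^ _ = 1
  rw [mul_pow, pow_eq_one_of_exponent_dvd (Nat.dvd_lcm_left _ _) ha,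
    pow_eq_one_of_exponent_dvd (Nat.dvd_lcm_right _ _) hb, one_mul]

variable [Finite G]

theorem isCyclic_sup_iff (A B : Subgroup G) [IsCyclic A] [IsCyclic B] :
    IsCyclic ↥(A ⊔ B) ↔ Nat.card ↥(A ⊓ B) = Nat.gcd (Nat.card A) (Nat.card B) := by
  rw [IsCyclic.iff_exponent_eq_card, exponent_sup, IsCyclic.exponent_eq_card,
    IsCyclic.exponent_eq_card]
  have hcard : Nat.card ↥(A ⊔ B) * Nat.card ↥(A ⊓ B) =
      Nat.lcm (Nat.card A) (Nat.card B) * Nat.gcd (Nat.card A) (Nat.card B) := by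
    rw [card_sup_mul_card_inf, ← Nat.gcd_mul_lcm, mul_comm]
  constructor
  · intro h
    rw [h] at hcard
    exact Nat.eq_of_mul_eq_mul_left Nat.card_pos hcard
  · intro h
    rw [h] at hcard
    exact (Nat.eq_of_mul_eq_mul_right (Nat.gcd_pos_of_pos_left _ Nat.card_pos) hcard).symm

theorem isCyclic_sup_sup {A B C : Subgroup G} (hAB : IsCyclic ↥(A ⊔ B))
    (hAC : IsCyclic ↥(A ⊔ C)) (hBC : IsCyclic ↥(B ⊔ C)) : IsCyclic ↥(A ⊔ B ⊔ C) := by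
  have : IsCyclic A := isCyclic_of_le (le_sup_left : A ≤ A ⊔ B)
  have : IsCyclic B := isCyclic_of_le (le_sup_right : B ≤ A ⊔ B)
  have : IsCyclic C := isCyclic_of_le (le_sup_right : C ≤ A ⊔ C)
  rw [isCyclic_sup_iff] at hAC hBC ⊢
  have hW : Nat.card ↥(A ⊔ B) = Nat.lcm (Nat.card A) (Nat.card B) := by
    rw [← IsCyclic.exponent_eq_card, exponent_sup, IsCyclic.exponent_eq_card,
      IsCyclic.exponent_eq_card]
  refine Nat.dvd_antisymm
    (Nat.dvd_gcd (card_dvd_of_le inf_le_left) (card_dvd_of_le inf_le_right)) ?_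
  rw [hW]
  refine (Nat.gcd_lcm_dvd_lcm_gcd_gcd _ _ _).trans (Nat.lcm_dvd ?_ ?_)
  · exact hAC ▸ card_dvd_of_le (inf_le_inf_right C le_sup_left)
  · exact hBC ▸ card_dvd_of_le (inf_le_inf_right C le_sup_right)

end CommGroup

end Subgroup

theorem cyclic_of_pairwise_cyclic (G : Type*) [Group G] [Finite G] (x y z : G)
    (hxy : IsCyclic ↥(Subgroup.closure {x, y}))
    (hxz : IsCyclic ↥(Subgroup.closure {x, z}))
    (hyz : IsCyclic ↥(Subgroup.closure {y, z})) :
    IsCyclic ↥(Subgroup.closure {x, y, z}) := by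
  set H := closure {x, y, z}
  have : IsMulCommutative H := isMulCommutative_closure_triple
    (commute_of_isCyclic_closure_pair hxy) (commute_of_isCyclic_closure_pair hxz)
    (commute_of_isCyclic_closure_pair hyz)
  let : CommGroup H := { mul_comm := mul_comm' }
  have hx : zpowers x ≤ H := zpowers_le.mpr (subset_closure (by simp))
  have hy : zpowers y ≤ H := zpowers_le.mpr (subset_closure (by simp))
  have hz : zpowers z ≤ H := zpowers_le.mpr (subset_closure (by simp))
  rw [closure_pair_eq_zpowers_sup, ← isCyclic_subgroupOf_sup_iff hx hy] at hxy
  rw [closure_pair_eq_zpowers_sup, ← isCyclic_subgroupOf_sup_iff hx hz] at hxz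
  rw [closure_pair_eq_zpowers_sup, ← isCyclic_subgroupOf_sup_iff hy hz] at hyz
  have hxyz := isCyclic_sup_sup hxy hxz hyz
  rwa [← subgroupOf_sup hx hy, isCyclic_subgroupOf_sup_iff (sup_le hx hy) hz, sup_assoc,
    ← closure_pair_eq_zpowers_sup, ← closure_insert_eq_zpowers_sup] at hxyz
end

section
/- The cycliciser Cyc(G) = { c ∈ G : ⟨c,g⟩ is cyclic for all g ∈ G } is a cyclic normal subgroup of G. -/
/-! An element `c` lies in `Cyc(G)` iff for every `g` both `c` and `g` are powers of one element
`x`. Closure under products follows by enlarging `⟨x⟩` to a cyclic group `⟨y⟩` containing `x` and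
the second factor `d`. Powers of one element commute, so `Cyc(G)` is central, hence normal. Inside
the finite group `Cyc(G)` any two elements generate a cyclic group, and then an element `m` of
maximal order generates everything: if `⟨m, c⟩ = ⟨y⟩`, then `⟨m⟩ ≤ ⟨y⟩` and `|⟨y⟩| ≤ |⟨m⟩|`. -/

open Function

namespace Subgroup

variable {G : Type*} [Group G]

theorem isCyclic_closure_pair_iff {a b : G} :
    IsCyclic (closure {a, b}) ↔ ∃ x, a ∈ zpowers x ∧ b ∈ zpowers x := by
  constructor
  · intro h
    obtain ⟨x, hx⟩ := (closure {a, b}).isCyclic_iff_exists_zpowers_eq_top.mp h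
    exact ⟨x, hx ▸ subset_closure (by simp), hx ▸ subset_closure (by simp)⟩
  · rintro ⟨x, ha, hb⟩
    exact isCyclic_of_le <| (closure_le _).mpr <|
      Set.insert_subset_iff.mpr ⟨ha, Set.singleton_subset_iff.mpr hb⟩

theorem isCyclic_closure_of_isCyclic_closure_image {G' : Type*} [Group G'] {f : G →* G'}
    (hf : Injective f) {s : Set G} (h : IsCyclic (closure (f '' s))) : IsCyclic (closure s) := by
  rw [← MonoidHom.map_closure] at h
  exact ((closure s).equivMapOfInjective f hf).symm.isCyclic.mp h

theorem isCyclic_of_forall_isCyclic_closure_pair [Finite G]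
    (h : ∀ a b : G, IsCyclic (closure {a, b})) : IsCyclic G := by
  obtain ⟨m, hm⟩ := Finite.exists_max (orderOf : G → ℕ)
  refine isCyclic_iff_exists_zpowers_eq_top.mpr ⟨m, (zpowers m).eq_top_iff'.mpr fun c ↦ ?_⟩
  obtain ⟨y, hmy, hcy⟩ := isCyclic_closure_pair_iff.mp (h m c)
  have hzpowers : zpowers m = zpowers y :=
    eq_of_le_of_card_ge (zpowers_le.mpr hmy) (by simpa only [Nat.card_zpowers] using hm y)
  exact hzpowers ▸ hcy

theorem normal_of_le_center {H : Subgroup G} (hH : H ≤ center G) : H.Normal where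
  conj_mem n hn g := by
    rwa [mem_center_iff.mp (hH hn) g, mul_inv_cancel_right]

variable (G) in
def cycliciser : Subgroup G where
  carrier := {c | ∀ g : G, IsCyclic (closure {c, g})}
  one_mem' g := isCyclic_closure_pair_iff.mpr ⟨g, one_mem _, mem_zpowers g⟩
  inv_mem' {c} hc g := by
    obtain ⟨x, hcx, hgx⟩ := isCyclic_closure_pair_iff.mp (hc g)
    exact isCyclic_closure_pair_iff.mpr ⟨x, inv_mem hcx, hgx⟩
  mul_mem' {c d} hc hd g := by
    obtain ⟨x, hcx, hgx⟩ := isCyclic_closure_pair_iff.mp (hc g)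
    obtain ⟨y, hdy, hxy⟩ := isCyclic_closure_pair_iff.mp (hd x)
    have hle : zpowers x ≤ zpowers y := zpowers_le.mpr hxy
    exact isCyclic_closure_pair_iff.mpr ⟨y, mul_mem (hle hcx) hdy, hle hgx⟩

theorem cycliciser_le_center : cycliciser G ≤ center G := by
  intro c hc
  refine mem_center_iff.mpr fun g ↦ ?_
  obtain ⟨x, ⟨k, rfl⟩, ⟨l, rfl⟩⟩ := isCyclic_closure_pair_iff.mp (hc g)
  exact Commute.zpow_zpow_self x l k

instance : (cycliciser G).Normal :=
  normal_of_le_center cycliciser_le_center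

instance [Finite G] : IsCyclic (cycliciser G) :=
  isCyclic_of_forall_isCyclic_closure_pair fun a b ↦
    isCyclic_closure_of_isCyclic_closure_image (cycliciser G).subtype_injective <| by
      rw [Set.image_pair]
      exact a.2 b

end Subgroup

theorem cycliciser_is_cyclic_normal_subgroup (G : Type*) [Group G] [Finite G] :
    ∃ N : Subgroup G,
      (N : Set G) = {c : G | ∀ g : G, IsCyclic ↥(Subgroup.closure {c, g})} ∧
      N.Normal ∧ IsCyclic ↥N :=
  ⟨Subgroup.cycliciser G, rfl, inferInstance, inferInstance⟩
end

section
/- If G is a finite group with d(G) ≥ 2, then d(G/Cyc(G)) = d(G). -/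
noncomputable def dG (G : Type*) [Group G] : ℕ :=
  sInf {n | ∃ s : Finset G, s.card = n ∧ Subgroup.closure (s : Set G) = ⊤}

def Flexible (G : Type*) [Group G] (k : ℕ) : Prop :=
  ∀ x : Fin k → G, dG ↥(Subgroup.closure (Set.range x)) = k →
    ∃ y : Fin (dG G - k) → G, Subgroup.closure (Set.range x ∪ Set.range y) = ⊤

/-!
Every element `c` of `N` lies in a cyclic subgroup together with any given `g`, so by induction
over the finite set `N` there is, for each `g`, a single `z` with `g ∈ ⟨z⟩` and `N ≤ ⟨z⟩`.
Lifting a minimal generating set of `G ⧸ N` to `G` and replacing one lift `g` by such a `z`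
yields a generating set of `G` of the same size, so `d(G) ≤ max (d(G ⧸ N)) 1`; the reverse
inequality `d(G ⧸ N) ≤ d(G)` holds for every quotient.
-/

open Subgroup

section

variable {G H : Type*} [Group G] [Group H]

variable (G) in
theorem dG_eq_rank [Group.FG G] : dG G = Group.rank G := by
  obtain ⟨s, hs, hcl⟩ : ∃ s : Finset G, s.card = dG G ∧ closure (s : Set G) = ⊤ :=
    Nat.sInf_mem (s := {n | ∃ s : Finset G, s.card = n ∧ closure (s : Set G) = ⊤})
      ⟨_, Group.rank_spec G⟩
  exact le_antisymm (Nat.sInf_le (Group.rank_spec G)) (hs ▸ Group.rank_le hcl)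

theorem exists_mem_zpowers_of_isCyclic_closure_pair {a b : G}
    (h : IsCyclic (closure {a, b})) : ∃ w, a ∈ zpowers w ∧ b ∈ zpowers w := by
  obtain ⟨w, hw⟩ := (closure {a, b}).isCyclic_iff_exists_zpowers_eq_top.mp h
  exact ⟨w, hw ▸ subset_closure (by simp), hw ▸ subset_closure (by simp)⟩

theorem exists_zpowers_superset_of_forall_isCyclic {s : Set G} (hs : s.Finite)
    (hcyc : ∀ c ∈ s, ∀ g : G, IsCyclic (closure {c, g})) (g : G) :
    ∃ z, g ∈ zpowers z ∧ s ⊆ zpowers z := by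
  induction s, hs using Set.Finite.induction_on with
  | empty => exact ⟨g, mem_zpowers g, Set.empty_subset _⟩
  | @insert c s _ _ ih =>
    obtain ⟨z, hgz, hsz⟩ := ih fun c' hc' => hcyc c' (Set.mem_insert_of_mem c hc')
    obtain ⟨w, hcw, hzw⟩ :=
      exists_mem_zpowers_of_isCyclic_closure_pair (hcyc c (Set.mem_insert c s) z)
    have hzw : zpowers z ≤ zpowers w := zpowers_le.mpr hzw
    exact ⟨w, hzw hgz, Set.insert_subset hcw (hsz.trans hzw)⟩

theorem exists_finset_card_le_closure_sup_ker_eq_top {f : G →* H} (hf : Function.Surjective f)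
    {t : Finset H} (ht : closure (t : Set H) = ⊤) :
    ∃ s : Finset G, s.card ≤ t.card ∧ closure (s : Set G) ⊔ f.ker = ⊤ := by
  classical
  refine ⟨t.image (Function.surjInv hf), Finset.card_image_le, ?_⟩
  have himage : f '' (t.image (Function.surjInv hf) : Set G) = t := by
    rw [Finset.coe_image, ← Set.image_comp, Function.comp_def]
    simp only [Function.surjInv_eq hf, Set.image_id']
  rw [← comap_map_eq, MonoidHom.map_closure, himage, ht, comap_top]

theorem closure_insert_erase_eq_top [DecidableEq G] {s : Finset G} {N : Subgroup G}
    (hs : closure (s : Set G) ⊔ N = ⊤) {g z : G} (hg : g ∈ zpowers z) (hN : N ≤ zpowers z) :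
    closure ((insert z (s.erase g) : Finset G) : Set G) = ⊤ := by
  set K := closure ((insert z (s.erase g) : Finset G) : Set G)
  have hzK : zpowers z ≤ K := zpowers_le.mpr (subset_closure (by simp))
  have hsK : (s : Set G) ⊆ K := by
    intro x hx
    by_cases hxg : x = g
    · exact hxg ▸ hzK hg
    · exact subset_closure (by simp [hxg, Finset.mem_coe.mp hx])
  rw [eq_top_iff, ← hs]
  exact sup_le ((closure_le K).mpr hsK) (hN.trans hzK)

theorem rank_le_max_rank_quotient_one [Group.FG G] (N : Subgroup G) [N.Normal]
    (hN : ∀ g : G, ∃ z, g ∈ zpowers z ∧ N ≤ zpowers z) :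
    Group.rank G ≤ max (Group.rank (G ⧸ N)) 1 := by
  classical
  obtain ⟨t, ht, htop⟩ := Group.rank_spec (G ⧸ N)
  obtain ⟨s, hst, hs⟩ :=
    exists_finset_card_le_closure_sup_ker_eq_top (QuotientGroup.mk'_surjective N) htop
  rw [QuotientGroup.ker_mk'] at hs
  rcases s.eq_empty_or_nonempty with rfl | ⟨g, hg⟩
  · obtain ⟨z, -, hz⟩ := hN 1
    calc Group.rank G ≤ (insert z ((∅ : Finset G).erase 1)).card :=
          Group.rank_le (closure_insert_erase_eq_top hs (one_mem _) hz)
      _ ≤ max (Group.rank (G ⧸ N)) 1 := by simp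
  · obtain ⟨z, hgz, hz⟩ := hN g
    calc Group.rank G ≤ (insert z (s.erase g)).card :=
          Group.rank_le (closure_insert_erase_eq_top hs hgz hz)
      _ ≤ (s.erase g).card + 1 := Finset.card_insert_le _ _
      _ = s.card := Finset.card_erase_add_one hg
      _ ≤ max (Group.rank (G ⧸ N)) 1 := ht ▸ hst.trans (le_max_left _ _)

end

theorem dG_quotient_cycliciser (G : Type*) [Group G] [Finite G]
    (N : Subgroup G) [N.Normal]
    (hN : ∀ c : G, c ∈ N ↔ ∀ g : G, IsCyclic ↥(Subgroup.closure {c, g}))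
    (hd : 2 ≤ dG G) :
    dG (G ⧸ N) = dG G := by
  have hcyc (g : G) : ∃ z, g ∈ zpowers z ∧ N ≤ zpowers z :=
    exists_zpowers_superset_of_forall_isCyclic (Set.toFinite (N : Set G))
      (fun c hc => (hN c).mp hc) g
  rw [dG_eq_rank] at hd ⊢
  rw [dG_eq_rank]
  have hle := Group.rank_le_of_surjective _ (QuotientGroup.mk'_surjective N)
  have hge := rank_le_max_rank_quotient_one N hcyc
  omega
end

section
/- Let G be a finite group, 1 ≤ k ≤ d(G), and suppose G is k-flexible. If N is a normal subgroup of G with d(G/N) = d(G), then G/N is k-flexible. -/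
/-! A generating tuple of the quotient lifts to a tuple of `G` generating a subgroup with the same
`d`: the lift needs no more generators, and it needs no fewer because `d` does not increase under
surjections of finitely generated groups. Flexibility of `G` completes the lift to a generating
tuple of `G`, whose image generates `G ⧸ N`; the equality `d(G ⧸ N) = d(G)` makes the number of
added elements match. -/

open Subgroup

section dG

variable {G H : Type*} [Group G] [Group H]

theorem dG_le_card {s : Finset G} (hs : closure (s : Set G) = ⊤) : dG G ≤ s.card :=
  Nat.sInf_le ⟨s, rfl, hs⟩

theorem exists_finset_card_eq_dG [Group.FG G] :
    ∃ s : Finset G, s.card = dG G ∧ closure (s : Set G) = ⊤ :=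
  Nat.sInf_mem (Group.fg_iff'.mp ‹_›)

theorem dG_le_of_surjective [Group.FG G] {f : G →* H} (hf : Function.Surjective f) :
    dG H ≤ dG G := by
  classical
  obtain ⟨s, hcard, hs⟩ := exists_finset_card_eq_dG (G := G)
  have hgen : closure ((s.image f : Finset H) : Set H) = ⊤ := by
    rw [Finset.coe_image, ← MonoidHom.map_closure, hs, map_top_of_surjective f hf]
  calc dG H ≤ (s.image f).card := dG_le_card hgen
    _ ≤ s.card := Finset.card_image_le
    _ = dG G := hcard

theorem dG_map_le (K : Subgroup G) [Group.FG K] (f : G →* H) : dG (K.map f) ≤ dG K :=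
  dG_le_of_surjective (f.subgroupMap_surjective K)

theorem dG_closure_range_le {k : ℕ} (x : Fin k → G) : dG (closure (Set.range x)) ≤ k := by
  classical
  let x' : Fin k → closure (Set.range x) := fun i => ⟨x i, subset_closure ⟨i, rfl⟩⟩
  have hgen : closure ((Finset.univ.image x' : Finset _) : Set (closure (Set.range x))) = ⊤ := by
    rw [Finset.coe_image, Finset.coe_univ, Set.image_univ, eq_top_iff,
      ← closure_closure_coe_preimage]
    exact closure_mono (by rintro ⟨_, _⟩ ⟨i, rfl⟩; exact ⟨i, rfl⟩)
  calc dG (closure (Set.range x)) ≤ (Finset.univ.image x').card := dG_le_card hgen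
    _ ≤ Finset.univ.card := Finset.card_image_le
    _ = k := Finset.card_fin k

theorem dG_closure_range_of_dG_closure_range_comp {k : ℕ} (x : Fin k → G) (f : G →* H)
    (hk : dG (closure (Set.range (f ∘ x))) = k) : dG (closure (Set.range x)) = k := by
  have hmap : (closure (Set.range x)).map f = closure (Set.range (f ∘ x)) := by
    rw [MonoidHom.map_closure, Set.range_comp]
  have := dG_map_le (closure (Set.range x)) f
  rw [hmap, hk] at this
  exact le_antisymm (dG_closure_range_le x) this

end dG

theorem Flexible.of_surjective {G H : Type*} [Group G] [Group H] {k : ℕ} (hG : Flexible G k)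
    {f : G →* H} (hf : Function.Surjective f) (hd : dG H = dG G) : Flexible H k := by
  intro x hx
  obtain ⟨x, rfl⟩ := hf.comp_left x
  obtain ⟨y, hy⟩ := hG x (dG_closure_range_of_dG_closure_range_comp x f hx)
  rw [hd]
  refine ⟨f ∘ y, ?_⟩
  rw [Set.range_comp, Set.range_comp, ← Set.image_union, ← MonoidHom.map_closure, hy,
    map_top_of_surjective f hf]

theorem flexible_quotient_general (G : Type*) [Group G] (k : ℕ)
    (hG : Flexible G k)
    (N : Subgroup G) [N.Normal] (hd : dG (G ⧸ N) = dG G) :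
    Flexible (G ⧸ N) k :=
  hG.of_surjective (QuotientGroup.mk'_surjective N) hd

theorem flexible_quotient (G : Type*) [Group G] [Finite G] (k : ℕ)
    (hk1 : 1 ≤ k) (hk2 : k ≤ dG G) (hG : Flexible G k)
    (N : Subgroup G) [N.Normal] (hd : dG (G ⧸ N) = dG G) :
    Flexible (G ⧸ N) k :=
  flexible_quotient_general G k hG N hd
end
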